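/- Let 𝓕 ⊊ 2^[n] be s-extremal of the form 𝓕 = 𝓕(𝓢,h) with Sh(𝓕) = 𝓗(𝓢), for a Sperner family 𝓢 ⊆ 2^[n] and a function h : 𝓢 → 2^[n] with h(S) ⊆ S for every S ∈ 𝓢. Then there exists F ∈ 2^[n] \ 𝓕 such that 𝓕 ∪ {F} is s-extremal if and only if there exists S₀ ∈ 𝓢 such that Q_{S₀,h(S₀)} ⊄ ⋃_{S ∈ 𝓢\{S₀}} Q_{S,h(S)}. -/

import Mathlib

open Finset

/-- `𝓕` shatters `S` if every subset of `S` arises as `F ∩ S` for some `F ∈ 𝓕`. -/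
def Shatters {n : ℕ} (𝓕 : Finset (Finset (Fin n))) (S : Finset (Fin n)) : Prop :=
  𝓕.image (· ∩ S) = S.powerset

/-- The family of all subsets of `[n]` shattered by `𝓕`. -/
def ShFam {n : ℕ} (𝓕 : Finset (Finset (Fin n))) : Finset (Finset (Fin n)) :=
  Finset.univ.filter fun S => 𝓕.image (· ∩ S) = S.powerset

/-- A set system is shattering-extremal if it shatters exactly `|𝓕|` sets. -/
def SExtremal {n : ℕ} (𝓕 : Finset (Finset (Fin n))) : Prop :=
  (ShFam 𝓕).card = 𝓕.card

/-- A Sperner family: no member contains another member. -/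
def IsSperner {n : ℕ} (𝓢 : Finset (Finset (Fin n))) : Prop :=
  ∀ S ∈ 𝓢, ∀ S' ∈ 𝓢, S ⊆ S' → S = S'

/-- `Q S H = {T ⊆ [n] : T ∩ S = H}`. -/
def Q {n : ℕ} (S H : Finset (Fin n)) : Finset (Finset (Fin n)) :=
  Finset.univ.filter fun T => T ∩ S = H

/-- `𝓗(𝓢) = {T ⊆ [n] : no S ∈ 𝓢 satisfies S ⊆ T}`. -/
def HFam {n : ℕ} (𝓢 : Finset (Finset (Fin n))) : Finset (Finset (Fin n)) :=
  Finset.univ.filter fun T => ∀ S ∈ 𝓢, ¬ S ⊆ T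

/-- `𝓕(𝓢,h) = 2^[n] \ ⋃_{S ∈ 𝓢} Q_{S,h(S)}`. -/
def FFam {n : ℕ} (𝓢 : Finset (Finset (Fin n))) (h : Finset (Fin n) → Finset (Fin n)) :
    Finset (Finset (Fin n)) :=
  Finset.univ \ 𝓢.biUnion fun S => Q S (h S)

/-! Deleting a point from every member never increases `#Sh(𝓕) - #𝓕`, which Pajor's inequality
keeps nonnegative; hence traces of s-extremal families are s-extremal. Applied to the trace of
`𝓕 = 𝓕(𝓢,h)` on `S ∈ 𝓢`, which shatters every proper subset of `S` (Sperner) but misses `h(S)`,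
this shows that the trace is exactly `2^S \ {h(S)}`. Consequently `𝓕 ∪ {F}` shatters precisely
`𝓗(𝓢)` together with those `S ∈ 𝓢` with `F ∩ S = h(S)`, so it is s-extremal iff `F` lies in
exactly one cube `Q_{S,h(S)}`. -/

namespace Finset

variable {α : Type*} [DecidableEq α] {𝒜 : Finset (Finset α)} {s t r F : Finset α} {a : α}

theorem Shatters.notMem (h : 𝒜.Shatters s) (ha : ∀ u ∈ 𝒜, a ∉ u) : a ∉ s := by
  obtain ⟨u, hu, hsu⟩ := h.exists_superset
  exact notMem_mono hsu (ha u hu)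

theorem Shatters.of_image_erase (h : (𝒜.image (erase · a)).Shatters s) : 𝒜.Shatters s := by
  have ha : a ∉ s := h.notMem (by simp)
  intro t ht
  obtain ⟨_, hu, rfl⟩ := h ht
  obtain ⟨v, hv, rfl⟩ := mem_image.1 hu
  exact ⟨v, hv, by rw [inter_erase, erase_eq_of_notMem fun hav ↦ ha (mem_inter.1 hav).1]⟩

theorem Shatters.insert_of_memberSubfamily_of_nonMemberSubfamily
    (h₁ : (𝒜.memberSubfamily a).Shatters s) (h₀ : (𝒜.nonMemberSubfamily a).Shatters s) :
    𝒜.Shatters (insert a s) := by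
  intro t ht
  rw [subset_insert_iff] at ht
  by_cases ha : a ∈ t
  · obtain ⟨u, hu, hsu⟩ := h₁ ht
    rw [mem_memberSubfamily] at hu
    exact ⟨_, hu.1, by rw [← insert_inter_distrib, hsu, insert_erase ha]⟩
  · obtain ⟨u, hu, hsu⟩ := h₀ ht
    rw [mem_nonMemberSubfamily] at hu
    exact ⟨_, hu.1, by rwa [insert_inter_of_notMem hu.2, hsu, erase_eq_self]⟩

theorem card_shatterer_image_erase_add_card_le (a : α) (𝒜 : Finset (Finset α)) :
    #(𝒜.image (erase · a)).shatterer + #𝒜 ≤ #𝒜.shatterer + #(𝒜.image (erase · a)) := by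
  set 𝓡 := 𝒜.image (erase · a)
  set 𝓜 := 𝒜.memberSubfamily a
  set 𝓝 := 𝒜.nonMemberSubfamily a
  set ℬ := (𝓜.shatterer ∩ 𝓝.shatterer).image (insert a)
  have h𝓝 : ∀ u ∈ (𝓜.shatterer ∩ 𝓝.shatterer), a ∉ u := fun u hu ↦
    (mem_shatterer.1 (mem_inter.1 hu).2).notMem fun v hv ↦ (mem_nonMemberSubfamily.1 hv).2
  have h𝓡 : ∀ u ∈ 𝓡.shatterer, a ∉ u := fun u hu ↦ (mem_shatterer.1 hu).notMem (by simp [𝓡])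
  have hcard𝒜 : #𝒜 = #𝓡 + #(𝓜 ∩ 𝓝) := by
    rw [← card_memberSubfamily_add_card_nonMemberSubfamily a, ← card_union_add_card_inter,
      memberSubfamily_union_nonMemberSubfamily]
  have hcardℬ : #ℬ = #(𝓜.shatterer ∩ 𝓝.shatterer) :=
    card_image_of_injOn fun u hu v hv huv ↦ by
      rw [← erase_insert (h𝓝 u hu), ← erase_insert (h𝓝 v hv)]
      exact congrArg (erase · a) huv
  have hinter : #(𝓜 ∩ 𝓝) ≤ #ℬ := hcardℬ ▸ (card_le_card_shatterer _).trans
    (card_le_card (subset_inter (shatterer_mono inter_subset_left)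
      (shatterer_mono inter_subset_right)))
  have hdisj : Disjoint 𝓡.shatterer ℬ := disjoint_left.2 fun u hu hu' ↦ by
    obtain ⟨v, -, rfl⟩ := mem_image.1 hu'
    exact h𝓡 _ hu (mem_insert_self a v)
  have hsub : 𝓡.shatterer ∪ ℬ ⊆ 𝒜.shatterer := union_subset
    (fun u hu ↦ mem_shatterer.2 (mem_shatterer.1 hu).of_image_erase)
    (forall_mem_image.2 fun u hu ↦ by
      simp only [mem_inter, mem_shatterer] at hu ⊢
      exact hu.1.insert_of_memberSubfamily_of_nonMemberSubfamily hu.2)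
  have := card_le_card hsub
  rw [card_union_of_disjoint hdisj] at this
  omega

theorem card_shatterer_image_sdiff_add_card_le (C : Finset α) (𝒜 : Finset (Finset α)) :
    #(𝒜.image (· \ C)).shatterer + #𝒜 ≤ #𝒜.shatterer + #(𝒜.image (· \ C)) := by
  induction C using Finset.induction_on with
  | empty => simp
  | @insert a C _ ih =>
    have himage : 𝒜.image (· \ insert a C) = (𝒜.image (· \ C)).image (erase · a) := by
      simp only [image_image, Function.comp_def, sdiff_insert]
    have := card_shatterer_image_erase_add_card_le a (𝒜.image (· \ C))
    rw [himage]
    omega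

theorem card_shatterer_image_inter_add_card_le [Fintype α] (s : Finset α)
    (𝒜 : Finset (Finset α)) :
    #(𝒜.image (s ∩ ·)).shatterer + #𝒜 ≤ #𝒜.shatterer + #(𝒜.image (s ∩ ·)) := by
  have himage : 𝒜.image (s ∩ ·) = 𝒜.image (· \ sᶜ) := by
    simp only [sdiff_compl, inter_comm s]
    rfl
  rw [himage]
  exact card_shatterer_image_sdiff_add_card_le sᶜ 𝒜

theorem Shatters.image_inter (h : 𝒜.Shatters t) (hts : t ⊆ s) :
    (𝒜.image (s ∩ ·)).Shatters t := by
  intro r hr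
  obtain ⟨u, hu, rfl⟩ := h hr
  exact ⟨s ∩ u, mem_image_of_mem _ hu, by rw [← inter_assoc, inter_eq_left.2 hts]⟩

/-- If only `F` has trace `r` on `s`, a set `t ⊇ s` shattered by `𝒜` must be `s` itself:
otherwise `r` and `r ∪ (t \ s)` would be two traces on `t` both realised by `F`. -/
theorem Shatters.eq_of_forall_inter_eq (ht : 𝒜.Shatters t) (hst : s ⊆ t) (hrs : r ⊆ s)
    (huniq : ∀ u ∈ 𝒜, s ∩ u = r → u = F) : t = s ∧ s ∩ F = r := by
  have htrace : ∀ q ⊆ t, s ∩ q = r → t ∩ F = q := by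
    intro q hq hsq
    obtain ⟨u, hu, htu⟩ := ht hq
    rw [← huniq u hu (by rw [← hsq, ← htu, ← inter_assoc, inter_eq_left.2 hst])]
    exact htu
  have h₁ := htrace r (hrs.trans hst) (inter_eq_right.2 hrs)
  have h₂ := htrace (r ∪ (t \ s)) (union_subset (hrs.trans hst) sdiff_subset) (by
    rw [inter_union_distrib_left, inter_eq_right.2 hrs, inter_sdiff_self, union_empty])
  refine ⟨subset_antisymm (fun x hx ↦ ?_) hst, ?_⟩
  · by_contra hxs
    have hxr : x ∈ r := by
      rw [← h₁, h₂]
      exact mem_union_right _ (mem_sdiff.2 ⟨hx, hxs⟩)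
    exact hxs (hrs hxr)
  · rw [← inter_eq_left.2 hst, inter_assoc, h₁, inter_eq_right.2 hrs]

end Finset

section FFam

variable {n : ℕ}

theorem mem_ShFam {𝓕 : Finset (Finset (Fin n))} {T : Finset (Fin n)} :
    T ∈ ShFam 𝓕 ↔ 𝓕.Shatters T := by
  simp only [ShFam, mem_filter, mem_univ, true_and, shatters_iff, inter_comm T]

theorem ShFam_eq_shatterer (𝓕 : Finset (Finset (Fin n))) : ShFam 𝓕 = 𝓕.shatterer := by
  ext T
  rw [mem_ShFam, mem_shatterer]

theorem sExtremal_iff_card_shatterer {𝓕 : Finset (Finset (Fin n))} :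
    SExtremal 𝓕 ↔ #𝓕.shatterer = #𝓕 := by
  rw [SExtremal, ShFam_eq_shatterer]

theorem mem_Q {S H T : Finset (Fin n)} : T ∈ Q S H ↔ T ∩ S = H := by
  simp [Q]

theorem mem_HFam {𝓢 : Finset (Finset (Fin n))} {T : Finset (Fin n)} :
    T ∈ HFam 𝓢 ↔ ∀ S ∈ 𝓢, ¬ S ⊆ T := by
  simp [HFam]

theorem mem_FFam {𝓢 : Finset (Finset (Fin n))} {h : Finset (Fin n) → Finset (Fin n)}
    {G : Finset (Fin n)} : G ∈ FFam 𝓢 h ↔ ∀ S ∈ 𝓢, G ∩ S ≠ h S := by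
  simp [FFam, mem_Q]

variable {𝓢 : Finset (Finset (Fin n))} {h : Finset (Fin n) → Finset (Fin n)}

theorem image_inter_FFam (hSperner : IsSperner 𝓢) (hsub : ∀ S ∈ 𝓢, h S ⊆ S)
    (hext : SExtremal (FFam 𝓢 h)) (hSh : ShFam (FFam 𝓢 h) = HFam 𝓢)
    {S₀ : Finset (Fin n)} (hS₀ : S₀ ∈ 𝓢) :
    (FFam 𝓢 h).image (S₀ ∩ ·) = S₀.powerset.erase (h S₀) := by
  set 𝓡 := (FFam 𝓢 h).image (S₀ ∩ ·)
  have h𝓡 : 𝓡 ⊆ S₀.powerset.erase (h S₀) := forall_mem_image.2 fun G hG ↦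
    mem_erase.2 ⟨by rw [inter_comm]; exact mem_FFam.1 hG S₀ hS₀, mem_powerset.2 inter_subset_left⟩
  have hshatterer : S₀.powerset.erase S₀ ⊆ 𝓡.shatterer := by
    intro T hT
    obtain ⟨hTS₀, hT⟩ := mem_erase.1 hT
    have hTH : T ∈ HFam 𝓢 := mem_HFam.2 fun S hS hST ↦
      hTS₀ (subset_antisymm (mem_powerset.1 hT) (hSperner S hS S₀ hS₀
        (hST.trans (mem_powerset.1 hT)) ▸ hST))
    rw [← hSh, mem_ShFam] at hTH
    exact mem_shatterer.2 (hTH.image_inter (mem_powerset.1 hT))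
  have hdeficit : #𝓡.shatterer + #(FFam 𝓢 h) ≤ #(FFam 𝓢 h).shatterer + #𝓡 :=
    card_shatterer_image_inter_add_card_le S₀ _
  rw [sExtremal_iff_card_shatterer.1 hext] at hdeficit
  refine eq_of_subset_of_card_le h𝓡 ?_
  calc #(S₀.powerset.erase (h S₀)) = #(S₀.powerset.erase S₀) := by
        rw [card_erase_of_mem (mem_powerset.2 (hsub S₀ hS₀)),
          card_erase_of_mem (mem_powerset.2 subset_rfl)]
    _ ≤ #𝓡.shatterer := card_le_card hshatterer
    _ ≤ #𝓡 := by omega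

theorem ShFam_insert_FFam (hSperner : IsSperner 𝓢) (hsub : ∀ S ∈ 𝓢, h S ⊆ S)
    (hext : SExtremal (FFam 𝓢 h)) (hSh : ShFam (FFam 𝓢 h) = HFam 𝓢) (F : Finset (Fin n)) :
    ShFam (insert F (FFam 𝓢 h)) = HFam 𝓢 ∪ 𝓢.filter (fun S ↦ F ∩ S = h S) := by
  refine subset_antisymm (fun T hT ↦ ?_) (union_subset ?_ fun S hS ↦ ?_)
  · by_cases hTH : T ∈ HFam 𝓢
    · exact mem_union_left _ hTH
    obtain ⟨S, hS, hST⟩ : ∃ S ∈ 𝓢, S ⊆ T := by simpa [mem_HFam] using hTH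
    have huniq : ∀ u ∈ insert F (FFam 𝓢 h), S ∩ u = h S → u = F := by
      intro u hu hSu
      refine (mem_insert.1 hu).resolve_right fun huF ↦ mem_FFam.1 huF S hS ?_
      rwa [inter_comm]
    obtain ⟨rfl, hFS⟩ := (mem_ShFam.1 hT).eq_of_forall_inter_eq hST (hsub S hS) huniq
    exact mem_union_right _ (mem_filter.2 ⟨hS, by rwa [inter_comm]⟩)
  · rw [← hSh, ShFam_eq_shatterer, ShFam_eq_shatterer]
    exact shatterer_mono (subset_insert F _)
  · obtain ⟨hS, hFS⟩ := mem_filter.1 hS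
    refine mem_ShFam.2 fun H hH ↦ ?_
    by_cases hHS : H = h S
    · exact ⟨F, mem_insert_self F _, by rw [inter_comm, hFS, hHS]⟩
    · have hH𝓡 : H ∈ (FFam 𝓢 h).image (S ∩ ·) := by
        rw [image_inter_FFam hSperner hsub hext hSh hS]
        exact mem_erase.2 ⟨hHS, mem_powerset.2 hH⟩
      obtain ⟨G, hG, hGH⟩ := mem_image.1 hH𝓡
      exact ⟨G, mem_insert_of_mem hG, hGH⟩

theorem card_ShFam_insert_FFam (hSperner : IsSperner 𝓢) (hsub : ∀ S ∈ 𝓢, h S ⊆ S)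
    (hext : SExtremal (FFam 𝓢 h)) (hSh : ShFam (FFam 𝓢 h) = HFam 𝓢) (F : Finset (Fin n)) :
    #(ShFam (insert F (FFam 𝓢 h))) = #(FFam 𝓢 h) + #(𝓢.filter fun S ↦ F ∩ S = h S) := by
  have hdisj : Disjoint (HFam 𝓢) (𝓢.filter fun S ↦ F ∩ S = h S) :=
    disjoint_left.2 fun S hSH hS ↦ mem_HFam.1 hSH S (mem_filter.1 hS).1 subset_rfl
  rw [ShFam_insert_FFam hSperner hsub hext hSh, card_union_of_disjoint hdisj, ← hSh, hext]

theorem notMem_and_sExtremal_insert_FFam_iff (hSperner : IsSperner 𝓢)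
    (hsub : ∀ S ∈ 𝓢, h S ⊆ S) (hext : SExtremal (FFam 𝓢 h))
    (hSh : ShFam (FFam 𝓢 h) = HFam 𝓢) (F : Finset (Fin n)) :
    (F ∉ FFam 𝓢 h ∧ SExtremal (insert F (FFam 𝓢 h))) ↔
      #(𝓢.filter fun S ↦ F ∩ S = h S) = 1 := by
  have hnew : F ∉ FFam 𝓢 h ↔ (𝓢.filter fun S ↦ F ∩ S = h S).Nonempty := by
    simp [mem_FFam, filter_nonempty_iff]
  rw [SExtremal, card_ShFam_insert_FFam hSperner hsub hext hSh, hnew]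
  constructor
  · rintro ⟨hne, hcard⟩
    rw [card_insert_of_notMem (hnew.2 hne)] at hcard
    omega
  · intro hcard
    have hne : (𝓢.filter fun S ↦ F ∩ S = h S).Nonempty := card_pos.1 (by omega)
    rw [card_insert_of_notMem (hnew.2 hne), hcard]
    exact ⟨hne, rfl⟩

theorem filter_inter_eq_eq_singleton_iff {F S₀ : Finset (Fin n)} :
    𝓢.filter (fun S ↦ F ∩ S = h S) = {S₀} ↔
      S₀ ∈ 𝓢 ∧ F ∈ Q S₀ (h S₀) ∧ F ∉ (𝓢.erase S₀).biUnion fun S ↦ Q S (h S) := by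
  simp only [eq_singleton_iff_unique_mem, mem_filter, mem_Q, mem_biUnion, mem_erase]
  grind

end FFam

theorem stmt_10_general {n : ℕ} (𝓕 𝓢 : Finset (Finset (Fin n)))
    (h : Finset (Fin n) → Finset (Fin n)) (hSperner : IsSperner 𝓢)
    (hsub : ∀ S ∈ 𝓢, h S ⊆ S) (hext : SExtremal 𝓕)
    (hF : 𝓕 = FFam 𝓢 h) (hSh : ShFam 𝓕 = HFam 𝓢) :
    (∃ F ∉ 𝓕, SExtremal (insert F 𝓕)) ↔
      ∃ S₀ ∈ 𝓢, ¬ (Q S₀ (h S₀) ⊆ (𝓢.erase S₀).biUnion fun S => Q S (h S)) := by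
  subst hF
  calc (∃ F ∉ FFam 𝓢 h, SExtremal (insert F (FFam 𝓢 h)))
      ↔ ∃ F, #(𝓢.filter fun S ↦ F ∩ S = h S) = 1 :=
        exists_congr (notMem_and_sExtremal_insert_FFam_iff hSperner hsub hext hSh)
    _ ↔ ∃ F S₀, 𝓢.filter (fun S ↦ F ∩ S = h S) = {S₀} := by simp only [card_eq_one]
    _ ↔ ∃ S₀ ∈ 𝓢, ∃ F ∈ Q S₀ (h S₀), F ∉ (𝓢.erase S₀).biUnion fun S ↦ Q S (h S) := by
        simp only [filter_inter_eq_eq_singleton_iff]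
        grind
    _ ↔ _ := by simp only [not_subset]

/-- Equivalence between the elimination conjecture and its cube formulation. -/
theorem stmt_10 {n : ℕ} (𝓕 𝓢 : Finset (Finset (Fin n)))
    (h : Finset (Fin n) → Finset (Fin n)) (hSperner : IsSperner 𝓢)
    (hsub : ∀ S ∈ 𝓢, h S ⊆ S) (hext : SExtremal 𝓕)
    (hproper : 𝓕 ⊂ Finset.univ) (hF : 𝓕 = FFam 𝓢 h) (hSh : ShFam 𝓕 = HFam 𝓢) :
    (∃ F ∉ 𝓕, SExtremal (insert F 𝓕)) ↔
      ∃ S₀ ∈ 𝓢, ¬ (Q S₀ (h S₀) ⊆ (𝓢.erase S₀).biUnion fun S => Q S (h S)) :=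
  stmt_10_general 𝓕 𝓢 h hSperner hsub hext hF hSh
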